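/- arXiv:2004.04357 — 2 statements merged into one kernel-verified Lean document; each statement's English description precedes it below -/
import Mathlib

section
/- (Smooth descent lemma for inexact prox-linear step.) Suppose $f:\mathbb{R}^m\to\mathbb{R}$ is convex, $\ell_f$-Lipschitz, twice differentiable with $\|f''(z)\|\le L_f$ for all $z$; $h$ is proper convex lower-semicontinuous; $g$ is differentiable with $\|g'(x)\|\le\ell_g$ and $L_g$-Lipschitz Jacobian. Let $L_{f\circ g}=\ell_f L_g + L_f\ell_g^2$ and $\Phi=f\circ g + h$. For any $x\in\operatorname{dom}h$, $\tilde g\in\mathbb{R}^m$, $\tilde J\in\mathbb{R}^{m\times n}$, $M>0$, the point $x_+=\operatorname{argmin}_y\{f(\tilde g+\tilde J(y-x))+h(y)+\frac{M}{2}\|y-x\|^2\}$ satisfies $\Phi(x_+)\le\Phi(x)-\frac{M-2L_{f\circ g}}{2}\|x_+-x\|^2 + L_f\|\tilde g - g(x)\|^2 + \frac{\ell_f}{2L_g}\|\tilde J - g'(x)\|^2$. -/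
/-!
Write `d = x₊ - x`. Comparing the subproblem at `x₊` with its value at `y = x` bounds
`h x₊ - h x` by `f(g̃) - f(g̃ + J̃ d) - M/2 ‖d‖²`, which reduces the claim to an inequality between
real numbers. Convexity of `f` gives `f(g̃) - f(g̃ + J̃ d) ≤ -f'(g̃)(J̃ d)`, while the sharp
quadratic Taylor bounds for `g` and for `f` (whose derivative is `L_f`-Lipschitz by the Hessian
bound) give `f(g(x₊)) ≤ f(g x) + f'(g x)(g' x d) + (ℓ_f L_g + L_f ℓ_g²)/2 ‖d‖²`. The mismatch
`f'(g x)(g' x d) - f'(g̃)(J̃ d)` between the two linear terms is split at `f'(g̃)(g' x d)`, and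
each part is absorbed by Young's inequality.
-/

open Set

theorem EReal.coe_add_le_coe_add_of_sub_le {a b c d : ℝ} {p q : EReal}
    (h : (a : EReal) + p ≤ b + q) (hsub : c - a ≤ d - b) : (c : EReal) + p ≤ d + q :=
  calc (c : EReal) + p = ((c - a : ℝ) : EReal) + (a + p) := by
        rw [← add_assoc, ← EReal.coe_add, _root_.sub_add_cancel c a]
    _ ≤ ((c - a : ℝ) : EReal) + (b + q) := by gcongr
    _ = ((c - a + b : ℝ) : EReal) + q := by rw [← add_assoc, ← EReal.coe_add]
    _ ≤ d + q := by gcongr; exact_mod_cast (by linarith : c - a + b ≤ d)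

theorem mul_le_sq_div_add_mul_sq {ε : ℝ} (hε : 0 < ε) (a b : ℝ) :
    a * b ≤ a ^ 2 / (2 * ε) + ε / 2 * b ^ 2 := by
  have hsq : a ^ 2 / (2 * ε) + ε / 2 * b ^ 2 - a * b = (a - ε * b) ^ 2 / (2 * ε) := by
    field_simp; ring
  rw [← sub_nonneg, hsq]
  positivity

section

variable {E F G : Type*} [NormedAddCommGroup E] [NormedSpace ℝ E]
  [NormedAddCommGroup F] [NormedSpace ℝ F] [NormedAddCommGroup G] [NormedSpace ℝ G]

/-- The sharp constant `L / 2` comes from comparing `t ↦ φ (p + t • w) - φ p - t • φ' p w`,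
whose derivative has norm at most `L t ‖w‖²`, with `t ↦ L / 2 * t² ‖w‖²` on `[0, 1]`. -/
theorem norm_sub_sub_fderiv_le_of_lipschitz_fderiv {φ : E → F} {φ' : E → E →L[ℝ] F} {L : ℝ}
    (hφ : ∀ z, HasFDerivAt φ (φ' z) z) (hlip : ∀ a b, ‖φ' a - φ' b‖ ≤ L * ‖a - b‖)
    (p w : E) : ‖φ (p + w) - φ p - φ' p w‖ ≤ L / 2 * ‖w‖ ^ 2 := by
  set ψ : ℝ → F := fun t => φ (p + t • w) - φ p - t • φ' p w
  have hψ : ∀ t : ℝ, HasDerivAt ψ (φ' (p + t • w) w - φ' p w) t := by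
    intro t
    have hline : HasDerivAt (fun s : ℝ => p + s • w) w t := by
      simpa using ((hasDerivAt_id t).smul_const w).const_add p
    have := (((hφ _).comp_hasDerivAt t hline).sub_const (φ p)).sub
      ((hasDerivAt_id t).smul_const (φ' p w))
    rwa [one_smul] at this
  have hbound : ∀ t ∈ Ico (0 : ℝ) 1, ‖φ' (p + t • w) w - φ' p w‖ ≤ L * ‖w‖ ^ 2 * t := by
    rintro t ⟨ht, -⟩
    calc ‖φ' (p + t • w) w - φ' p w‖ = ‖(φ' (p + t • w) - φ' p) w‖ := rfl
      _ ≤ ‖φ' (p + t • w) - φ' p‖ * ‖w‖ := ContinuousLinearMap.le_opNorm _ _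
      _ ≤ L * ‖(p + t • w) - p‖ * ‖w‖ := by gcongr; exact hlip _ _
      _ = L * ‖w‖ ^ 2 * t := by
        rw [add_sub_cancel_left, norm_smul, Real.norm_of_nonneg ht]; ring
  have hB : ∀ t : ℝ, HasDerivAt (fun s : ℝ => L / 2 * ‖w‖ ^ 2 * s ^ 2) (L * ‖w‖ ^ 2 * t) t := by
    intro t
    exact ((hasDerivAt_pow 2 t).const_mul _).congr_deriv (by push_cast; ring)
  have := image_norm_le_of_norm_deriv_right_le_deriv_boundary
    (fun t _ => (hψ t).continuousAt.continuousWithinAt) (fun t _ => (hψ t).hasDerivWithinAt)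
    (by simp [ψ]) hB hbound (right_mem_Icc.2 zero_le_one)
  simpa [ψ] using this

theorem ConvexOn.add_fderiv_sub_le {f : E → ℝ} {f' : E →L[ℝ] ℝ} {p : E}
    (hconv : ConvexOn ℝ univ f) (hf : HasFDerivAt f f' p) (q : E) : f p + f' (q - p) ≤ f q := by
  set ℓ : ℝ →ᵃ[ℝ] E := AffineMap.lineMap p q
  have hline : ConvexOn ℝ univ (f ∘ ℓ) := by simpa using hconv.comp_affineMap ℓ
  have hderiv : HasDerivAt (f ∘ ℓ) (f' (q - p)) 0 := by
    simpa using hf.comp_hasDerivAt_of_eq 0 AffineMap.hasDerivAt_lineMap (by simp)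
  have := hline.le_slope_of_hasDerivAt (mem_univ 0) (mem_univ 1) zero_lt_one hderiv
  simp only [slope_def_field, Function.comp_apply, ℓ, AffineMap.lineMap_apply_one,
    AffineMap.lineMap_apply_zero, sub_zero, div_one] at this
  linarith

theorem ContinuousLinearMap.norm_apply_apply_sub_apply_apply_le (φ ψ : F →L[ℝ] G)
    (A B : E →L[ℝ] F) (d : E) :
    ‖φ (A d) - ψ (B d)‖ ≤ ‖φ - ψ‖ * (‖A‖ * ‖d‖) + ‖ψ‖ * (‖A - B‖ * ‖d‖) := by
  have hsplit : φ (A d) - ψ (B d) = (φ - ψ) (A d) + ψ ((A - B) d) := by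
    simp only [sub_apply, map_sub]; abel
  rw [hsplit]
  refine (norm_add_le _ _).trans (add_le_add ?_ ?_) <;>
    exact le_opNorm_of_le _ (le_opNorm _ _)

theorem comp_le_add_fderiv_comp_add_sq {f : F → ℝ} {f' : F → F →L[ℝ] ℝ} {g : E → F}
    {g' : E → E →L[ℝ] F} {ℓf Lf ℓg Lg : ℝ} (hℓf : 0 ≤ ℓf) (hLf : 0 ≤ Lf)
    (hfLip : ∀ u v, |f u - f v| ≤ ℓf * ‖u - v‖) (hf' : ∀ z, HasFDerivAt f (f' z) z)
    (hf'lip : ∀ a b, ‖f' a - f' b‖ ≤ Lf * ‖a - b‖) (hg : ∀ u, HasFDerivAt g (g' u) u)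
    (hg'bd : ∀ u, ‖g' u‖ ≤ ℓg) (hg'lip : ∀ u v, ‖g' u - g' v‖ ≤ Lg * ‖u - v‖) (x d : E) :
    f (g (x + d)) ≤ f (g x) + f' (g x) (g' x d) + (ℓf * Lg + Lf * ℓg ^ 2) / 2 * ‖d‖ ^ 2 := by
  have hg_taylor := norm_sub_sub_fderiv_le_of_lipschitz_fderiv hg hg'lip x d
  have hf_taylor := norm_sub_sub_fderiv_le_of_lipschitz_fderiv hf' hf'lip (g x) (g' x d)
  have hgd : ‖g' x d‖ ≤ ℓg * ‖d‖ := (g' x).le_of_opNorm_le (hg'bd x) d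
  have hf_lin : f (g (x + d)) - f (g x + g' x d) ≤ ℓf * (Lg / 2 * ‖d‖ ^ 2) :=
    calc f (g (x + d)) - f (g x + g' x d) ≤ ℓf * ‖g (x + d) - (g x + g' x d)‖ :=
          (le_abs_self _).trans (hfLip _ _)
      _ ≤ ℓf * (Lg / 2 * ‖d‖ ^ 2) := by rw [← sub_sub]; gcongr
  have hf_quad : f (g x + g' x d) - f (g x) - f' (g x) (g' x d) ≤ Lf / 2 * (ℓg * ‖d‖) ^ 2 :=
    calc _ ≤ Lf / 2 * ‖g' x d‖ ^ 2 := (le_abs_self _).trans hf_taylor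
      _ ≤ Lf / 2 * (ℓg * ‖d‖) ^ 2 := by gcongr
  linarith

theorem fderiv_apply_sub_fderiv_apply_le {f' : F → F →L[ℝ] ℝ} {ℓf Lf ℓg Lg : ℝ}
    (hℓf : 0 ≤ ℓf) (hLf : 0 ≤ Lf) (hLg : 0 < Lg) (hf'bd : ∀ z, ‖f' z‖ ≤ ℓf)
    (hf'lip : ∀ a b, ‖f' a - f' b‖ ≤ Lf * ‖a - b‖) {A : E →L[ℝ] F} (hA : ‖A‖ ≤ ℓg)
    (a b : F) (B : E →L[ℝ] F) (d : E) :
    f' a (A d) - f' b (B d) ≤ Lf * ‖b - a‖ ^ 2 + ℓf / (2 * Lg) * ‖B - A‖ ^ 2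
      + (Lf * ℓg ^ 2 / 4 + ℓf * Lg / 2) * ‖d‖ ^ 2 := by
  have hyoung₁ : Lf * (‖b - a‖ * (ℓg * ‖d‖)) ≤ Lf * ‖b - a‖ ^ 2 + Lf * ℓg ^ 2 / 4 * ‖d‖ ^ 2 :=
    (mul_le_mul_of_nonneg_left
      (mul_le_sq_div_add_mul_sq one_half_pos ‖b - a‖ (ℓg * ‖d‖)) hLf).trans_eq (by ring)
  have hyoung₂ : ℓf * (‖B - A‖ * ‖d‖) ≤ ℓf / (2 * Lg) * ‖B - A‖ ^ 2 + ℓf * Lg / 2 * ‖d‖ ^ 2 :=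
    (mul_le_mul_of_nonneg_left
      (mul_le_sq_div_add_mul_sq hLg ‖B - A‖ ‖d‖) hℓf).trans_eq (by ring)
  calc _ ≤ ‖f' a - f' b‖ * (‖A‖ * ‖d‖) + ‖f' b‖ * (‖A - B‖ * ‖d‖) :=
        (le_abs_self _).trans ((f' a).norm_apply_apply_sub_apply_apply_le (f' b) A B d)
    _ ≤ Lf * ‖a - b‖ * (ℓg * ‖d‖) + ℓf * (‖A - B‖ * ‖d‖) := by
        gcongr
        exacts [hf'lip a b, hf'bd b]
    _ = Lf * (‖b - a‖ * (ℓg * ‖d‖)) + ℓf * (‖B - A‖ * ‖d‖) := by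
        rw [norm_sub_rev a, norm_sub_rev A]; ring
    _ ≤ _ := by linarith

end

theorem stmt14_general {n m : ℕ}
    (f : EuclideanSpace ℝ (Fin m) → ℝ)
    (f' : EuclideanSpace ℝ (Fin m) → (EuclideanSpace ℝ (Fin m) →L[ℝ] ℝ))
    (f'' : EuclideanSpace ℝ (Fin m) →
      (EuclideanSpace ℝ (Fin m) →L[ℝ] (EuclideanSpace ℝ (Fin m) →L[ℝ] ℝ)))
    (ℓf Lf ℓg Lg M : ℝ)
    (hℓf : 0 ≤ ℓf) (hLf : 0 ≤ Lf) (hLg : 0 < Lg)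
    (hfconv : ConvexOn ℝ Set.univ f)
    (hfLip : ∀ u v, |f u - f v| ≤ ℓf * ‖u - v‖)
    (hf' : ∀ z, HasFDerivAt f (f' z) z)
    (hf'' : ∀ z, HasFDerivAt f' (f'' z) z)
    (hf''bd : ∀ z, ‖f'' z‖ ≤ Lf)
    (g : EuclideanSpace ℝ (Fin n) → EuclideanSpace ℝ (Fin m))
    (g' : EuclideanSpace ℝ (Fin n) →
      (EuclideanSpace ℝ (Fin n) →L[ℝ] EuclideanSpace ℝ (Fin m)))
    (hg : ∀ u, HasFDerivAt g (g' u) u)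
    (hg'bd : ∀ u, ‖g' u‖ ≤ ℓg)
    (hg' : ∀ u v, ‖g' u - g' v‖ ≤ Lg * ‖u - v‖)
    (h : EuclideanSpace ℝ (Fin n) → EReal)
    (x : EuclideanSpace ℝ (Fin n))
    (tg : EuclideanSpace ℝ (Fin m))
    (tJ : EuclideanSpace ℝ (Fin n) →L[ℝ] EuclideanSpace ℝ (Fin m))
    (xplus : EuclideanSpace ℝ (Fin n))
    (hmin : ∀ y,
      ((f (tg + tJ (xplus - x)) + M / 2 * ‖xplus - x‖ ^ 2 : ℝ) : EReal) + h xplus ≤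
      ((f (tg + tJ (y - x)) + M / 2 * ‖y - x‖ ^ 2 : ℝ) : EReal) + h y) :
    ((f (g xplus) : ℝ) : EReal) + h xplus ≤
      ((f (g x) : ℝ) : EReal) + h x +
      ((Lf * ‖tg - g x‖ ^ 2 + ℓf / (2 * Lg) * ‖tJ - g' x‖ ^ 2
        - (M - 2 * (ℓf * Lg + Lf * ℓg ^ 2)) / 2 * ‖xplus - x‖ ^ 2 : ℝ) : EReal) := by
  have hf'lip : ∀ a b, ‖f' a - f' b‖ ≤ Lf * ‖a - b‖ := fun a b =>
    convex_univ.norm_image_sub_le_of_norm_hasFDerivWithin_le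
      (fun z _ => (hf'' z).hasFDerivWithinAt) (fun z _ => hf''bd z) (mem_univ b) (mem_univ a)
  have hf'bd : ∀ z, ‖f' z‖ ≤ ℓf := fun z => by
    simpa [Real.coe_toNNReal ℓf hℓf] using (hf' z).le_of_lipschitz
      (LipschitzWith.of_dist_le_mul (K := ℓf.toNNReal) fun u v => by
        simpa [Real.dist_eq, dist_eq_norm, Real.coe_toNNReal ℓf hℓf] using hfLip u v)
  set d := xplus - x
  have hsmooth := comp_le_add_fderiv_comp_add_sq hℓf hLf hfLip hf' hf'lip hg hg'bd hg' x d
  rw [add_sub_cancel] at hsmooth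
  have hconvex := hfconv.add_fderiv_sub_le (hf' tg) (tg + tJ d)
  rw [add_sub_cancel_left] at hconvex
  have hmodel :=
    fderiv_apply_sub_fderiv_apply_le hℓf hLf hLg hf'bd hf'lip (hg'bd x) (g x) tg tJ d
  have hdecrease := hmin x
  simp only [sub_self, map_zero, add_zero, norm_zero, ne_eq, OfNat.ofNat_ne_zero,
    not_false_eq_true, zero_pow, mul_zero] at hdecrease
  rw [add_right_comm, ← EReal.coe_add]
  refine EReal.coe_add_le_coe_add_of_sub_le hdecrease ?_
  have : 0 ≤ Lf * ℓg ^ 2 * ‖d‖ ^ 2 := by positivity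
  linarith

/-- Smooth descent lemma for the inexact prox-linear step: with
`L_{f∘g} = ℓf Lg + Lf ℓg²` and `Φ = f ∘ g + h`, the minimizer `xplus` of the
approximate prox-linear subproblem satisfies
`Φ(xplus) ≤ Φ(x) - (M - 2L_{f∘g})/2 ‖xplus - x‖² + Lf‖tg - g(x)‖²
+ (ℓf/(2Lg))‖tJ - g'(x)‖²`. -/
theorem stmt14 {n m : ℕ}
    (f : EuclideanSpace ℝ (Fin m) → ℝ)
    (f' : EuclideanSpace ℝ (Fin m) → (EuclideanSpace ℝ (Fin m) →L[ℝ] ℝ))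
    (f'' : EuclideanSpace ℝ (Fin m) →
      (EuclideanSpace ℝ (Fin m) →L[ℝ] (EuclideanSpace ℝ (Fin m) →L[ℝ] ℝ)))
    (ℓf Lf ℓg Lg M : ℝ)
    (hℓf : 0 ≤ ℓf) (hLf : 0 ≤ Lf) (hℓg : 0 ≤ ℓg) (hLg : 0 < Lg) (hM : 0 < M)
    (hfconv : ConvexOn ℝ Set.univ f)
    (hfLip : ∀ u v, |f u - f v| ≤ ℓf * ‖u - v‖)
    (hf' : ∀ z, HasFDerivAt f (f' z) z)
    (hf'' : ∀ z, HasFDerivAt f' (f'' z) z)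
    (hf''bd : ∀ z, ‖f'' z‖ ≤ Lf)
    (g : EuclideanSpace ℝ (Fin n) → EuclideanSpace ℝ (Fin m))
    (g' : EuclideanSpace ℝ (Fin n) →
      (EuclideanSpace ℝ (Fin n) →L[ℝ] EuclideanSpace ℝ (Fin m)))
    (hg : ∀ u, HasFDerivAt g (g' u) u)
    (hg'bd : ∀ u, ‖g' u‖ ≤ ℓg)
    (hg' : ∀ u v, ‖g' u - g' v‖ ≤ Lg * ‖u - v‖)
    (h : EuclideanSpace ℝ (Fin n) → EReal)
    (hconv : ∀ a b : EuclideanSpace ℝ (Fin n), ∀ t : ℝ, 0 ≤ t → t ≤ 1 →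
      h (t • a + (1 - t) • b) ≤ ((t : ℝ) : EReal) * h a + (((1 - t : ℝ)) : EReal) * h b)
    (hlsc : LowerSemicontinuous h)
    (hproper : ∀ y, h y ≠ ⊥)
    (x : EuclideanSpace ℝ (Fin n)) (hx : h x ≠ ⊤)
    (tg : EuclideanSpace ℝ (Fin m))
    (tJ : EuclideanSpace ℝ (Fin n) →L[ℝ] EuclideanSpace ℝ (Fin m))
    (xplus : EuclideanSpace ℝ (Fin n))
    (hmin : ∀ y,
      ((f (tg + tJ (xplus - x)) + M / 2 * ‖xplus - x‖ ^ 2 : ℝ) : EReal) + h xplus ≤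
      ((f (tg + tJ (y - x)) + M / 2 * ‖y - x‖ ^ 2 : ℝ) : EReal) + h y) :
    ((f (g xplus) : ℝ) : EReal) + h xplus ≤
      ((f (g x) : ℝ) : EReal) + h x +
      ((Lf * ‖tg - g x‖ ^ 2 + ℓf / (2 * Lg) * ‖tJ - g' x‖ ^ 2
        - (M - 2 * (ℓf * Lg + Lf * ℓg ^ 2)) / 2 * ‖xplus - x‖ ^ 2 : ℝ) : EReal) :=
  stmt14_general f f' f'' ℓf Lf ℓg Lg M hℓf hLf hLg hfconv hfLip hf' hf'' hf''bd g g' hg hg'bd hg' h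
    x tg tJ xplus hmin
end

section
/- (Gradient-mapping comparison, smooth case.) Under the assumptions of the smooth descent lemma, with $\hat x_+ = \operatorname{argmin}_y\{f(g(x)+g'(x)(y-x))+h(y)+\frac{M}{2}\|y-x\|^2\}$, $x_+$ as before, $\mathcal{G}(x)=M(x-\hat x_+)$, $\widetilde{\mathcal{G}}(x)=M(x-x_+)$, and $M>L_{f\circ g}$: $\frac{M-L_{f\circ g}}{M^2}\|\mathcal{G}(x)\|^2 \le \frac{2M+L_{f\circ g}}{M^2}\|\widetilde{\mathcal{G}}(x)\|^2 + 3L_f\|\tilde g-g(x)\|^2 + \frac{2\ell_f}{L_g}\|\tilde J-g'(x)\|^2$. -/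
/-!
Both prox subproblems are `M`-strongly convex, so each minimizer beats the other one by
`M / 2 * ‖xplus - xhat‖ ^ 2` in its own objective. Adding the two inequalities, `h` cancels and
`M * ‖xplus - xhat‖ ^ 2` is bounded by the variation between `xhat` and `xplus` of the difference
of the two linearized models of `f ∘ g`. Convexity and Lipschitz continuity of `f` and the descent
lemma for `∇f` bound that variation by
`Lf ℓg ‖xplus - xhat‖ ‖tg - g x‖ + Lf ‖tg - g x‖² + ℓf ‖tJ - g' x‖ (‖xhat - x‖ + ‖xplus - x‖)`;
the triangle inequality `‖xhat - x‖ ≤ ‖xplus - xhat‖ + ‖xplus - x‖` and two Young inequalities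
turn this into the comparison of `‖𝒢(x)‖` with `‖𝒢̃(x)‖`.
-/

open Set Filter Topology
open scoped RealInnerProductSpace

section Gradient

variable {F : Type*} [NormedAddCommGroup F] [InnerProductSpace ℝ F] [CompleteSpace F]
  {f : F → ℝ} {grad v : F}

theorem hasDerivAt_comp_lineMap_of_hasGradientAt {u : F} (hf : HasGradientAt f grad v) :
    HasDerivAt (f ∘ AffineMap.lineMap (k := ℝ) v u) ⟪grad, u - v⟫ 0 := by
  have hv : AffineMap.lineMap v u (0 : ℝ) = v := AffineMap.lineMap_apply_zero v u
  have := (hv ▸ hf.hasFDerivAt).comp_hasDerivAt (0 : ℝ) AffineMap.hasDerivAt_lineMap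
  simpa [InnerProductSpace.toDual_apply_apply] using this

theorem ConvexOn.add_inner_le_of_hasGradientAt (hfc : ConvexOn ℝ univ f)
    (hf : HasGradientAt f grad v) (u : F) : f v + ⟪grad, u - v⟫ ≤ f u := by
  have hline : ConvexOn ℝ univ (f ∘ AffineMap.lineMap (k := ℝ) v u) := hfc.comp_affineMap _
  have := hline.le_slope_of_hasDerivAt (mem_univ 0) (mem_univ 1) zero_lt_one
    (hasDerivAt_comp_lineMap_of_hasGradientAt hf)
  simp only [slope_def_field, Function.comp_apply, AffineMap.lineMap_apply_one,
    AffineMap.lineMap_apply_zero, sub_zero, div_one] at this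
  linarith

-- The mean value inequality on a ball gives the constant `L`, not the sharp `L / 2`.
theorem le_add_inner_add_mul_sq_of_lipschitz_gradient {f' : F → F} {L : ℝ} (hL0 : 0 ≤ L)
    (hf : ∀ z, HasGradientAt f (f' z) z) (hL : ∀ u v, ‖f' u - f' v‖ ≤ L * ‖u - v‖) (u v : F) :
    f u ≤ f v + ⟪f' v, u - v⟫ + L * ‖u - v‖ ^ 2 := by
  let D := InnerProductSpace.toDual ℝ F
  have hball : ∀ w ∈ Metric.closedBall v ‖u - v‖, ‖D (f' w) - D (f' v)‖ ≤ L * ‖u - v‖ := by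
    intro w hw
    rw [← map_sub, LinearIsometryEquiv.norm_map]
    exact (hL w v).trans (by gcongr; rwa [← dist_eq_norm])
  have hmvt := (convex_closedBall v ‖u - v‖).norm_image_sub_le_of_norm_hasFDerivWithin_le'
    (fun w _ ↦ (hf w).hasFDerivAt.hasFDerivWithinAt) hball
    (Metric.mem_closedBall_self (norm_nonneg _)) (y := u) (by simp [dist_eq_norm])
  rw [Real.norm_eq_abs, InnerProductSpace.toDual_apply_apply] at hmvt
  nlinarith [le_abs_self (f u - f v - ⟪f' v, u - v⟫)]

end Gradient

theorem ConvexOn.comp_add_clm_sub {E F : Type*} [NormedAddCommGroup E] [NormedSpace ℝ E]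
    [NormedAddCommGroup F] [NormedSpace ℝ F] {f : F → ℝ} (hf : ConvexOn ℝ univ f) (c : F)
    (A : E →L[ℝ] F) (x : E) :
    ConvexOn ℝ univ fun y ↦ f (c + A (y - x)) := by
  have hcomp : (fun y ↦ f (c + A (y - x))) =
      f ∘ ((A : E →ₗ[ℝ] F).toAffineMap + AffineMap.const ℝ E (c - A x)) := by
    ext y
    simp [map_sub, add_sub_left_comm]
  rw [hcomp]
  exact hf.comp_affineMap _

section Linearization

variable {F : Type*} [NormedAddCommGroup F] [InnerProductSpace ℝ F] [CompleteSpace F]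
  {f : F → ℝ} {f' : F → F} {L ℓ : ℝ}

theorem sub_le_inner_add_of_lipschitz_gradient (hL0 : 0 ≤ L)
    (hf : ∀ z, HasGradientAt f (f' z) z) (hL : ∀ u v, ‖f' u - f' v‖ ≤ L * ‖u - v‖)
    (hℓ : ∀ u v, |f u - f v| ≤ ℓ * ‖u - v‖) (p e r : F) :
    f (p + e + r) - f p ≤ ⟪f' p, e⟫ + L * ‖e‖ ^ 2 + ℓ * ‖r‖ := by
  have hdescent := le_add_inner_add_mul_sq_of_lipschitz_gradient hL0 hf hL (p + e) p
  have hlip := (le_abs_self _).trans (hℓ (p + e + r) (p + e))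
  simp only [add_sub_cancel_left] at hdescent hlip
  linarith

theorem inner_sub_le_of_convexOn (hfc : ConvexOn ℝ univ f)
    (hℓ : ∀ u v, |f u - f v| ≤ ℓ * ‖u - v‖) {grad p : F} (hf : HasGradientAt f grad p) (e r : F) :
    ⟪grad, e⟫ - ℓ * ‖r‖ ≤ f (p + e + r) - f p := by
  have hsupport := hfc.add_inner_le_of_hasGradientAt hf (p + e)
  have hlip := (neg_abs_le _).trans' (neg_le_neg (hℓ (p + e + r) (p + e)))
  simp only [add_sub_cancel_left] at hsupport hlip
  linarith

theorem linearization_gap_le {E : Type*} [NormedAddCommGroup E] [NormedSpace ℝ E]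
    (hfc : ConvexOn ℝ univ f) (hL0 : 0 ≤ L) (hℓ0 : 0 ≤ ℓ)
    (hf : ∀ z, HasGradientAt f (f' z) z) (hL : ∀ u v, ‖f' u - f' v‖ ≤ L * ‖u - v‖)
    (hℓ : ∀ u v, |f u - f v| ≤ ℓ * ‖u - v‖) (c c' : F) (A A' : E →L[ℝ] F) (x y z : E) :
    (f (c' + A' (y - x)) - f (c + A (y - x))) - (f (c' + A' (z - x)) - f (c + A (z - x))) ≤
      L * ‖A‖ * ‖y - z‖ * ‖c' - c‖ + L * ‖c' - c‖ ^ 2 + ℓ * ‖A' - A‖ * (‖y - x‖ + ‖z - x‖) := by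
  have hsplit : ∀ w, c' + A' w = c + A w + (c' - c) + (A' - A) w := by
    intro w
    rw [sub_apply]
    abel
  have hup := sub_le_inner_add_of_lipschitz_gradient hL0 hf hL hℓ
    (c + A (y - x)) (c' - c) ((A' - A) (y - x))
  have hlow := inner_sub_le_of_convexOn hfc hℓ (hf (c + A (z - x))) (c' - c) ((A' - A) (z - x))
  rw [← hsplit] at hup hlow
  have hgrad : ⟪f' (c + A (y - x)) - f' (c + A (z - x)), c' - c⟫ ≤
      L * ‖A‖ * ‖y - z‖ * ‖c' - c‖ :=
    calc _ ≤ ‖f' (c + A (y - x)) - f' (c + A (z - x))‖ * ‖c' - c‖ := real_inner_le_norm _ _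
      _ ≤ L * ‖A (y - z)‖ * ‖c' - c‖ := by
          have hdiff : c + A (y - x) - (c + A (z - x)) = A (y - z) := by
            simp only [map_sub]
            abel
          gcongr
          exact hdiff ▸ hL _ _
      _ ≤ L * (‖A‖ * ‖y - z‖) * ‖c' - c‖ := by
          gcongr
          exact A.le_opNorm _
      _ = L * ‖A‖ * ‖y - z‖ * ‖c' - c‖ := by ring
  have hperturb : ∀ w, ℓ * ‖(A' - A) w‖ ≤ ℓ * ‖A' - A‖ * ‖w‖ := fun w ↦ by
    rw [mul_assoc]
    exact mul_le_mul_of_nonneg_left ((A' - A).le_opNorm w) hℓ0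
  rw [inner_sub_left] at hgrad
  linarith [hperturb (y - x), hperturb (z - x)]

end Linearization

section ExtendedValued

variable {E : Type*} {h : E → EReal}

theorem ne_top_of_coe_add_le_coe_add {a b : ℝ} {u w : EReal} (hw : w ≠ ⊤)
    (hle : (a : EReal) + u ≤ b + w) : u ≠ ⊤ := by
  rintro rfl
  rw [EReal.coe_add_top, top_le_iff] at hle
  exact EReal.add_lt_top (EReal.coe_ne_top b) hw |>.ne hle

theorem convexOn_toReal_setOf_ne_top [AddCommGroup E] [Module ℝ E]
    (hconv : ∀ a b : E, ∀ t : ℝ, 0 ≤ t → t ≤ 1 →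
      h (t • a + (1 - t) • b) ≤ ((t : ℝ) : EReal) * h a + (((1 - t : ℝ)) : EReal) * h b)
    (hproper : ∀ y, h y ≠ ⊥) :
    ConvexOn ℝ {y | h y ≠ ⊤} fun y ↦ (h y).toReal := by
  have hcomb : ∀ a, h a ≠ ⊤ → ∀ b, h b ≠ ⊤ → ∀ s t : ℝ, 0 ≤ s → 0 ≤ t → s + t = 1 →
      h (s • a + t • b) ≤ ((s * (h a).toReal + t * (h b).toReal : ℝ) : EReal) := by
    intro a ha b hb s t hs ht hst
    obtain rfl : t = 1 - s := by linarith
    have := hconv a b s hs (by linarith)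
    rwa [← EReal.coe_toReal ha (hproper a), ← EReal.coe_toReal hb (hproper b)] at this
  refine ⟨fun a ha b hb s t hs ht hst ↦ ?_, fun a ha b hb s t hs ht hst ↦ ?_⟩
  · exact ne_top_of_le_ne_top (EReal.coe_ne_top _) (hcomb a ha b hb s t hs ht hst)
  · have := EReal.toReal_le_toReal (hcomb a ha b hb s t hs ht hst) (hproper _)
      (EReal.coe_ne_top _)
    rwa [EReal.toReal_coe] at this

theorem isMinOn_add_toReal {F : E → ℝ} {xs : E} (hproper : ∀ y, h y ≠ ⊥) (hxs : h xs ≠ ⊤)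
    (hmin : ∀ y, (F xs : EReal) + h xs ≤ (F y : EReal) + h y) :
    IsMinOn (fun y ↦ F y + (h y).toReal) {y | h y ≠ ⊤} xs := by
  intro y hy
  have := hmin y
  rwa [← EReal.coe_toReal hxs (hproper xs), ← EReal.coe_toReal hy (hproper y),
    ← EReal.coe_add, ← EReal.coe_add, EReal.coe_le_coe_iff] at this

end ExtendedValued

section StrongConvexity

variable {E : Type*} [NormedAddCommGroup E]

theorem StrongConvexOn.add_sq_le_of_isMinOn [NormedSpace ℝ E] {s : Set E} {m : ℝ} {f : E → ℝ}
    {xs y : E} (hf : StrongConvexOn s m f) (hmin : IsMinOn f s xs) (hxs : xs ∈ s) (hy : y ∈ s) :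
    f xs + m / 2 * ‖y - xs‖ ^ 2 ≤ f y := by
  have hseg : ∀ t ∈ Ioo (0 : ℝ) 1, (1 - t) * (m / 2 * ‖y - xs‖ ^ 2) ≤ f y - f xs := by
    rintro t ⟨ht0, ht1⟩
    have hconv := hf.2 hy hxs ht0.le (sub_nonneg.2 ht1.le) (add_sub_cancel t 1)
    have hle := hmin (hf.1 hy hxs ht0.le (sub_nonneg.2 ht1.le) (add_sub_cancel t 1))
    simp only [smul_eq_mul, mem_ofPred_eq] at hconv hle
    nlinarith
  have hlim : Tendsto (fun t : ℝ ↦ (1 - t) * (m / 2 * ‖y - xs‖ ^ 2)) (𝓝[>] 0)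
      (𝓝 (m / 2 * ‖y - xs‖ ^ 2)) := by
    have : Continuous fun t : ℝ ↦ (1 - t) * (m / 2 * ‖y - xs‖ ^ 2) := by fun_prop
    simpa using (this.tendsto 0).mono_left nhdsWithin_le_nhds
  have := le_of_tendsto hlim (eventually_of_mem (Ioo_mem_nhdsGT one_pos) hseg)
  linarith

variable [InnerProductSpace ℝ E]

theorem ConvexOn.strongConvexOn_add_sq_norm_sub {s : Set E} {φ : E → ℝ} (hφ : ConvexOn ℝ s φ)
    (m : ℝ) (x : E) : StrongConvexOn s m fun y ↦ φ y + m / 2 * ‖y - x‖ ^ 2 := by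
  have hquad : (fun y ↦ φ y + m / 2 * ‖y - x‖ ^ 2 - m / 2 * ‖y‖ ^ 2)
      = φ + (⇑((-m) • innerₛₗ ℝ x) + fun _ ↦ m / 2 * ‖x‖ ^ 2) := by
    ext y
    simp only [Pi.add_apply, LinearMap.smul_apply, innerₛₗ_apply_apply, smul_eq_mul,
      norm_sub_sq_real, real_inner_comm x y]
    ring
  rw [strongConvexOn_iff_convex, hquad]
  exact hφ.add ((((-m) • innerₛₗ ℝ x).convexOn hφ.1).add_const _)

end StrongConvexity

section Prox

variable {E : Type*} [NormedAddCommGroup E] [InnerProductSpace ℝ E] {h : E → EReal}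
  {φ ψ : E → ℝ} {M : ℝ} {x : E}

theorem prox_add_sq_le
    (hφ : ConvexOn ℝ univ φ)
    (hconv : ∀ a b : E, ∀ t : ℝ, 0 ≤ t → t ≤ 1 →
      h (t • a + (1 - t) • b) ≤ ((t : ℝ) : EReal) * h a + (((1 - t : ℝ)) : EReal) * h b)
    (hproper : ∀ y, h y ≠ ⊥) {xs y : E}
    (hmin : ∀ y, ((φ xs + M / 2 * ‖xs - x‖ ^ 2 : ℝ) : EReal) + h xs ≤
      ((φ y + M / 2 * ‖y - x‖ ^ 2 : ℝ) : EReal) + h y)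
    (hxs : h xs ≠ ⊤) (hy : h y ≠ ⊤) :
    φ xs + M / 2 * ‖xs - x‖ ^ 2 + (h xs).toReal + M / 2 * ‖y - xs‖ ^ 2 ≤
      φ y + M / 2 * ‖y - x‖ ^ 2 + (h y).toReal := by
  have hH := convexOn_toReal_setOf_ne_top hconv hproper
  have hstrong := ((hφ.subset (subset_univ _) hH.1).add hH).strongConvexOn_add_sq_norm_sub M x
  have hminOn : IsMinOn (fun y ↦ (φ + fun y ↦ (h y).toReal) y + M / 2 * ‖y - x‖ ^ 2)
      {y | h y ≠ ⊤} xs := fun z hz ↦ by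
    have := isMinOn_add_toReal (F := fun y ↦ φ y + M / 2 * ‖y - x‖ ^ 2) hproper hxs hmin hz
    simp only [mem_ofPred_eq, Pi.add_apply] at this ⊢
    linarith
  have := hstrong.add_sq_le_of_isMinOn hminOn hxs hy
  simp only [Pi.add_apply] at this
  linarith

theorem prox_dist_sq_le (hφ : ConvexOn ℝ univ φ) (hψ : ConvexOn ℝ univ ψ)
    (hconv : ∀ a b : E, ∀ t : ℝ, 0 ≤ t → t ≤ 1 →
      h (t • a + (1 - t) • b) ≤ ((t : ℝ) : EReal) * h a + (((1 - t : ℝ)) : EReal) * h b)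
    (hproper : ∀ y, h y ≠ ⊥) (hx : h x ≠ ⊤) {xφ xψ : E}
    (hminφ : ∀ y, ((φ xφ + M / 2 * ‖xφ - x‖ ^ 2 : ℝ) : EReal) + h xφ ≤
      ((φ y + M / 2 * ‖y - x‖ ^ 2 : ℝ) : EReal) + h y)
    (hminψ : ∀ y, ((ψ xψ + M / 2 * ‖xψ - x‖ ^ 2 : ℝ) : EReal) + h xψ ≤
      ((ψ y + M / 2 * ‖y - x‖ ^ 2 : ℝ) : EReal) + h y) :
    M * ‖xψ - xφ‖ ^ 2 ≤ (ψ xφ - φ xφ) - (ψ xψ - φ xψ) := by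
  have hφT := ne_top_of_coe_add_le_coe_add hx (hminφ x)
  have hψT := ne_top_of_coe_add_le_coe_add hx (hminψ x)
  have := prox_add_sq_le hφ hconv hproper hminφ hφT hψT
  have := prox_add_sq_le hψ hconv hproper hminψ hψT hφT
  rw [norm_sub_rev xφ xψ] at this
  linarith

end Prox

theorem gradient_mapping_ineq_of_dist_bound {ℓf Lf ℓg Lg M a b d e j : ℝ}
    (hℓf : 0 ≤ ℓf) (hLf : 0 ≤ Lf) (hLg : 0 < Lg) (hM : ℓf * Lg + Lf * ℓg ^ 2 < M)
    (ha : 0 ≤ a) (hj : 0 ≤ j)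
    (hd : M * d ^ 2 ≤ Lf * ℓg * d * e + Lf * e ^ 2 + ℓf * j * (a + b)) (htri : a ≤ d + b) :
    (M - (ℓf * Lg + Lf * ℓg ^ 2)) * a ^ 2 ≤
      (2 * M + (ℓf * Lg + Lf * ℓg ^ 2)) * b ^ 2 + 3 * Lf * e ^ 2 + 2 * ℓf / Lg * j ^ 2 := by
  set P := ℓf * Lg
  set Q := Lf * ℓg ^ 2
  set w := 2 * ℓf / Lg * j ^ 2
  have hP : 0 ≤ P := by positivity
  have hQ : 0 ≤ Q := by positivity
  have hw : Lg * w = 2 * ℓf * j ^ 2 := by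
    simp only [w]
    field_simp
  have hyoung₁ : 2 * (Lf * ℓg * d * e) ≤ Q * d ^ 2 + Lf * e ^ 2 := by
    nlinarith [mul_nonneg hLf (sq_nonneg (ℓg * d - e))]
  have hyoung₂ : 2 * (ℓf * j * (d + 2 * b)) ≤ w + P * (d + 2 * b) ^ 2 / 2 := by
    refine le_of_mul_le_mul_left ?_ hLg
    nlinarith [mul_nonneg hℓf (sq_nonneg (2 * j - Lg * (d + 2 * b)))]
  have hjab : ℓf * j * (a + b) ≤ ℓf * j * (d + 2 * b) :=
    mul_le_mul_of_nonneg_left (by linarith) (by positivity)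
  have hquad : (M - (P + Q)) * (d + b) ^ 2 + P * (d + 2 * b) ^ 2 / 2 + Q * d ^ 2 ≤
      (2 * M + (P + Q)) * b ^ 2 + 2 * M * d ^ 2 := by
    -- the gap is `(M - Q) * (b - d) ^ 2 + 3 * Q * b ^ 2 + (Q + P / 2) * d ^ 2`
    nlinarith [mul_nonneg (by linarith : 0 ≤ M - Q) (sq_nonneg (b - d)),
      mul_nonneg hQ (sq_nonneg b), mul_nonneg (by positivity : 0 ≤ Q + P / 2) (sq_nonneg d)]
  have ha2 : (M - (P + Q)) * a ^ 2 ≤ (M - (P + Q)) * (d + b) ^ 2 := by gcongr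
  linarith

theorem stmt15_general {n m : ℕ}
    (f : EuclideanSpace ℝ (Fin m) → ℝ)
    (f' : EuclideanSpace ℝ (Fin m) → EuclideanSpace ℝ (Fin m))
    (ℓf Lf ℓg Lg M : ℝ)
    (hℓf : 0 ≤ ℓf) (hLf : 0 ≤ Lf) (hLg : 0 < Lg)
    (hM : ℓf * Lg + Lf * ℓg ^ 2 < M)
    (hfconv : ConvexOn ℝ Set.univ f)
    (hfLip : ∀ u v, |f u - f v| ≤ ℓf * ‖u - v‖)
    (hf' : ∀ z, HasGradientAt f (f' z) z)
    (hf'L : ∀ u v, ‖f' u - f' v‖ ≤ Lf * ‖u - v‖)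
    (g : EuclideanSpace ℝ (Fin n) → EuclideanSpace ℝ (Fin m))
    (g' : EuclideanSpace ℝ (Fin n) →
      (EuclideanSpace ℝ (Fin n) →L[ℝ] EuclideanSpace ℝ (Fin m)))
    (hg'bd : ∀ u, ‖g' u‖ ≤ ℓg)
    (h : EuclideanSpace ℝ (Fin n) → EReal)
    (hconv : ∀ a b : EuclideanSpace ℝ (Fin n), ∀ t : ℝ, 0 ≤ t → t ≤ 1 →
      h (t • a + (1 - t) • b) ≤ ((t : ℝ) : EReal) * h a + (((1 - t : ℝ)) : EReal) * h b)
    (hproper : ∀ y, h y ≠ ⊥)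
    (x : EuclideanSpace ℝ (Fin n)) (hx : h x ≠ ⊤)
    (tg : EuclideanSpace ℝ (Fin m))
    (tJ : EuclideanSpace ℝ (Fin n) →L[ℝ] EuclideanSpace ℝ (Fin m))
    (xhat xplus : EuclideanSpace ℝ (Fin n))
    (hmin1 : ∀ y,
      ((f (g x + g' x (xhat - x)) + M / 2 * ‖xhat - x‖ ^ 2 : ℝ) : EReal) + h xhat ≤
      ((f (g x + g' x (y - x)) + M / 2 * ‖y - x‖ ^ 2 : ℝ) : EReal) + h y)
    (hmin2 : ∀ y,
      ((f (tg + tJ (xplus - x)) + M / 2 * ‖xplus - x‖ ^ 2 : ℝ) : EReal) + h xplus ≤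
      ((f (tg + tJ (y - x)) + M / 2 * ‖y - x‖ ^ 2 : ℝ) : EReal) + h y) :
    (M - (ℓf * Lg + Lf * ℓg ^ 2)) / M ^ 2 * ‖M • (x - xhat)‖ ^ 2 ≤
      (2 * M + (ℓf * Lg + Lf * ℓg ^ 2)) / M ^ 2 * ‖M • (x - xplus)‖ ^ 2
      + 3 * Lf * ‖tg - g x‖ ^ 2 + 2 * ℓf / Lg * ‖tJ - g' x‖ ^ 2 := by
  have hMpos : 0 < M := lt_of_le_of_lt (by positivity) hM
  have hdist := prox_dist_sq_le (hfconv.comp_add_clm_sub (g x) (g' x) x)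
    (hfconv.comp_add_clm_sub tg tJ x) hconv hproper hx hmin1 hmin2
  have hgap := linearization_gap_le hfconv hLf hℓf hf' hf'L hfLip (g x) tg (g' x) tJ x xhat xplus
  have hkey : M * ‖xplus - xhat‖ ^ 2 ≤ Lf * ℓg * ‖xplus - xhat‖ * ‖tg - g x‖
      + Lf * ‖tg - g x‖ ^ 2 + ℓf * ‖tJ - g' x‖ * (‖xhat - x‖ + ‖xplus - x‖) := by
    rw [norm_sub_rev xhat xplus] at hgap
    calc _ ≤ _ := hdist
      _ ≤ _ := hgap
      _ ≤ _ := by gcongr; exact hg'bd x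
  have htri : ‖xhat - x‖ ≤ ‖xplus - xhat‖ + ‖xplus - x‖ :=
    norm_sub_rev xplus xhat ▸ norm_sub_le_norm_sub_add_norm_sub xhat xplus x
  have hscale (c : ℝ) (r : EuclideanSpace ℝ (Fin n)) : c / M ^ 2 * ‖M • r‖ ^ 2 = c * ‖r‖ ^ 2 := by
    rw [norm_smul, Real.norm_of_nonneg hMpos.le]
    field_simp
  rw [hscale, hscale, norm_sub_rev x, norm_sub_rev x]
  exact gradient_mapping_ineq_of_dist_bound hℓf hLf hLg hM (norm_nonneg _) (norm_nonneg _) hkey htri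

/-- Gradient-mapping comparison lemma (smooth case): with
`L_{f∘g} = ℓf Lg + Lf ℓg²`, `𝒢(x) = M(x - xhat)` and `𝒢̃(x) = M(x - xplus)` built
from the exact and approximate prox-linear subproblems,
`(M - L_{f∘g})/M² ‖𝒢(x)‖² ≤ (2M + L_{f∘g})/M² ‖𝒢̃(x)‖² + 3Lf‖tg - g(x)‖²
+ (2ℓf/Lg)‖tJ - g'(x)‖²`. -/
theorem stmt15 {n m : ℕ}
    (f : EuclideanSpace ℝ (Fin m) → ℝ)
    (f' : EuclideanSpace ℝ (Fin m) → EuclideanSpace ℝ (Fin m))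
    (ℓf Lf ℓg Lg M : ℝ)
    (hℓf : 0 ≤ ℓf) (hLf : 0 ≤ Lf) (hℓg : 0 ≤ ℓg) (hLg : 0 < Lg)
    (hM : ℓf * Lg + Lf * ℓg ^ 2 < M)
    (hfconv : ConvexOn ℝ Set.univ f)
    (hfLip : ∀ u v, |f u - f v| ≤ ℓf * ‖u - v‖)
    (hf' : ∀ z, HasGradientAt f (f' z) z)
    (hf'L : ∀ u v, ‖f' u - f' v‖ ≤ Lf * ‖u - v‖)
    (g : EuclideanSpace ℝ (Fin n) → EuclideanSpace ℝ (Fin m))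
    (g' : EuclideanSpace ℝ (Fin n) →
      (EuclideanSpace ℝ (Fin n) →L[ℝ] EuclideanSpace ℝ (Fin m)))
    (hg : ∀ u, HasFDerivAt g (g' u) u)
    (hg'bd : ∀ u, ‖g' u‖ ≤ ℓg)
    (hg' : ∀ u v, ‖g' u - g' v‖ ≤ Lg * ‖u - v‖)
    (h : EuclideanSpace ℝ (Fin n) → EReal)
    (hconv : ∀ a b : EuclideanSpace ℝ (Fin n), ∀ t : ℝ, 0 ≤ t → t ≤ 1 →
      h (t • a + (1 - t) • b) ≤ ((t : ℝ) : EReal) * h a + (((1 - t : ℝ)) : EReal) * h b)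
    (hlsc : LowerSemicontinuous h)
    (hproper : ∀ y, h y ≠ ⊥)
    (x : EuclideanSpace ℝ (Fin n)) (hx : h x ≠ ⊤)
    (tg : EuclideanSpace ℝ (Fin m))
    (tJ : EuclideanSpace ℝ (Fin n) →L[ℝ] EuclideanSpace ℝ (Fin m))
    (xhat xplus : EuclideanSpace ℝ (Fin n))
    (hmin1 : ∀ y,
      ((f (g x + g' x (xhat - x)) + M / 2 * ‖xhat - x‖ ^ 2 : ℝ) : EReal) + h xhat ≤
      ((f (g x + g' x (y - x)) + M / 2 * ‖y - x‖ ^ 2 : ℝ) : EReal) + h y)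
    (hmin2 : ∀ y,
      ((f (tg + tJ (xplus - x)) + M / 2 * ‖xplus - x‖ ^ 2 : ℝ) : EReal) + h xplus ≤
      ((f (tg + tJ (y - x)) + M / 2 * ‖y - x‖ ^ 2 : ℝ) : EReal) + h y) :
    (M - (ℓf * Lg + Lf * ℓg ^ 2)) / M ^ 2 * ‖M • (x - xhat)‖ ^ 2 ≤
      (2 * M + (ℓf * Lg + Lf * ℓg ^ 2)) / M ^ 2 * ‖M • (x - xplus)‖ ^ 2
      + 3 * Lf * ‖tg - g x‖ ^ 2 + 2 * ℓf / Lg * ‖tJ - g' x‖ ^ 2 :=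
  stmt15_general f f' ℓf Lf ℓg Lg M hℓf hLf hLg hM hfconv hfLip hf' hf'L g g' hg'bd h hconv hproper
    x hx tg tJ xhat xplus hmin1 hmin2
end
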